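/- Let G be a compact Hausdorff topological group and H a closed subgroup. If an invariant kernel k on G/H admits a continuous positive decomposition k = k₊ − k₋ with k₊, k₋ continuous positive definite kernels, then k admits a continuous positive decomposition into invariant kernels: there exist continuous PD kernels k₊', k₋' on G/H, each invariant under the canonical left G-action, with k = k₊' − k₋'. (The converse is immediate.) -/

import Mathlib

open scoped ComplexOrder

section Defs

variable {G : Type} [Group G] (H : Subgroup G)

/-- A kernel on `G/H` is positive definite if all its Gram matrices are positive
semidefinite. -/
def IsPDKernel (k : G ⧸ H → G ⧸ H → ℂ) : Prop :=
  ∀ (N : ℕ) (x : Fin N → G ⧸ H) (c : Fin N → ℂ),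
    0 ≤ ∑ i, ∑ j, (starRingEnd ℂ) (c i) * c j * k (x i) (x j)

/-- A kernel on `G/H` is invariant if it is invariant under the canonical left
`G`-action. -/
def IsInvariantKernel (k : G ⧸ H → G ⧸ H → ℂ) : Prop :=
  ∀ (g : G) (x y : G ⧸ H), k (g • x) (g • y) = k x y

end Defs

/-!
Averaging over the normalized Haar measure, `k ↦ ((x, y) ↦ ∫ k (g⁻¹ • x) (g⁻¹ • y) dg)`, turns any
kernel into an invariant one. On continuous kernels it is linear and preserves continuity and
positive definiteness (a Gram form of the average is the integral of nonnegative Gram forms), and it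
fixes invariant kernels. Averaging `k₊` and `k₋` therefore splits the average of `k`, which is `k`.
-/

open MeasureTheory

section AveragedKernel

variable {G : Type} [Group G] [MeasurableSpace G] {H : Subgroup G}

noncomputable def averagedKernel (μ : Measure G) (k : G ⧸ H → G ⧸ H → ℂ) (x y : G ⧸ H) : ℂ :=
  ∫ g, k (g⁻¹ • x) (g⁻¹ • y) ∂μ

theorem isInvariantKernel_averagedKernel [MeasurableMul G] (μ : Measure G)
    [μ.IsMulLeftInvariant] (k : G ⧸ H → G ⧸ H → ℂ) :
    IsInvariantKernel H (averagedKernel μ k) := by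
  intro g x y
  simpa [averagedKernel, mul_smul] using
    integral_mul_left_eq_self (μ := μ) (fun g' => k (g'⁻¹ • x) (g'⁻¹ • y)) g⁻¹

theorem IsInvariantKernel.averagedKernel_eq (μ : Measure G) [IsProbabilityMeasure μ]
    {k : G ⧸ H → G ⧸ H → ℂ} (hk : IsInvariantKernel H k) :
    averagedKernel μ k = k := by
  ext x y
  simp only [averagedKernel, hk _ x y, integral_const, probReal_univ, one_smul]

variable [TopologicalSpace G] [IsTopologicalGroup G] [CompactSpace G] [OpensMeasurableSpace G]

theorem Continuous.integrable_inv_smul_kernel {μ : Measure G} [IsFiniteMeasure μ]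
    {k : G ⧸ H → G ⧸ H → ℂ} (hk : Continuous (Function.uncurry k)) (x y : G ⧸ H) :
    Integrable (fun g : G => k (g⁻¹ • x) (g⁻¹ • y)) μ :=
  (hk.comp (by fun_prop : Continuous fun g : G => (g⁻¹ • x, g⁻¹ • y)))
    |>.integrable_of_hasCompactSupport (HasCompactSupport.of_compactSpace _)

theorem averagedKernel_sub (μ : Measure G) [IsFiniteMeasure μ] {k₁ k₂ : G ⧸ H → G ⧸ H → ℂ}
    (hk₁ : Continuous (Function.uncurry k₁)) (hk₂ : Continuous (Function.uncurry k₂)) :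
    averagedKernel μ (k₁ - k₂) = averagedKernel μ k₁ - averagedKernel μ k₂ := by
  ext x y
  exact integral_sub (hk₁.integrable_inv_smul_kernel x y) (hk₂.integrable_inv_smul_kernel x y)

theorem Continuous.averagedKernel (μ : Measure G) [IsFiniteMeasure μ]
    {k : G ⧸ H → G ⧸ H → ℂ} (hk : Continuous (Function.uncurry k)) :
    Continuous (Function.uncurry (averagedKernel μ k)) := by
  have hF : Continuous (Function.uncurry
      fun (p : (G ⧸ H) × (G ⧸ H)) (g : G) => k (g⁻¹ • p.1) (g⁻¹ • p.2)) :=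
    hk.comp (by fun_prop : Continuous fun q : ((G ⧸ H) × (G ⧸ H)) × G =>
      (q.2⁻¹ • q.1.1, q.2⁻¹ • q.1.2))
  exact continuousOn_univ.mp <|
    continuousOn_integral_of_compact_support isCompact_univ hF.continuousOn (by simp)

theorem IsPDKernel.averagedKernel (μ : Measure G) [IsFiniteMeasure μ]
    {k : G ⧸ H → G ⧸ H → ℂ} (hk : Continuous (Function.uncurry k)) (hPD : IsPDKernel H k) :
    IsPDKernel H (averagedKernel μ k) := by
  intro N x c
  have hint i j : Integrable
      (fun g : G => starRingEnd ℂ (c i) * c j * k (g⁻¹ • x i) (g⁻¹ • x j)) μ :=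
    (hk.integrable_inv_smul_kernel (x i) (x j)).const_mul _
  calc (0 : ℂ) ≤ ∫ g, ∑ i, ∑ j, starRingEnd ℂ (c i) * c j * k (g⁻¹ • x i) (g⁻¹ • x j) ∂μ :=
        integral_nonneg fun g => hPD N (fun i => g⁻¹ • x i) c
    _ = _ := by
        rw [integral_finsetSum _ fun i _ => integrable_finsetSum _ fun j _ => hint i j]
        refine Finset.sum_congr rfl fun i _ => ?_
        rw [integral_finsetSum _ fun j _ => hint i j]
        exact Finset.sum_congr rfl fun j _ => integral_const_mul _ _

end AveragedKernel

theorem isProbabilityMeasure_haarMeasure_top {G : Type} [Group G] [TopologicalSpace G]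
    [IsTopologicalGroup G] [CompactSpace G] [MeasurableSpace G] [BorelSpace G] :
    IsProbabilityMeasure (Measure.haarMeasure (⊤ : TopologicalSpace.PositiveCompacts G)) :=
  ⟨by simpa using Measure.haarMeasure_self (K₀ := (⊤ : TopologicalSpace.PositiveCompacts G))⟩

theorem invariant_kernel_invariant_positive_decomposition_of_compact_general
    {G : Type} [Group G] [TopologicalSpace G] [IsTopologicalGroup G]
    [CompactSpace G]
    (H : Subgroup G)
    (k : G ⧸ H → G ⧸ H → ℂ)
    (hinv : IsInvariantKernel H k)
    (kp km : G ⧸ H → G ⧸ H → ℂ)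
    (hkpc : Continuous (Function.uncurry kp)) (hkpPD : IsPDKernel H kp)
    (hkmc : Continuous (Function.uncurry km)) (hkmPD : IsPDKernel H km)
    (hdec : ∀ x y, k x y = kp x y - km x y) :
    ∃ kp' km' : G ⧸ H → G ⧸ H → ℂ,
      Continuous (Function.uncurry kp') ∧ IsPDKernel H kp' ∧ IsInvariantKernel H kp' ∧
      Continuous (Function.uncurry km') ∧ IsPDKernel H km' ∧ IsInvariantKernel H km' ∧
      ∀ x y, k x y = kp' x y - km' x y := by
  borelize G
  let μ := Measure.haarMeasure (⊤ : TopologicalSpace.PositiveCompacts G)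
  have : IsProbabilityMeasure μ := isProbabilityMeasure_haarMeasure_top
  have hk : k = averagedKernel μ kp - averagedKernel μ km := by
    have hk_sub : kp - km = k := funext₂ fun x y => (hdec x y).symm
    rw [← averagedKernel_sub μ hkpc hkmc, hk_sub, hinv.averagedKernel_eq μ]
  exact ⟨averagedKernel μ kp, averagedKernel μ km,
    hkpc.averagedKernel μ, hkpPD.averagedKernel μ hkpc, isInvariantKernel_averagedKernel μ kp,
    hkmc.averagedKernel μ, hkmPD.averagedKernel μ hkmc, isInvariantKernel_averagedKernel μ km,
    fun x y => congrFun₂ hk x y⟩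

/-- on a compact group `G` with closed subgroup `H`, an invariant
Hermitian kernel on `G/H` admitting a continuous positive decomposition admits a
continuous positive decomposition into invariant kernels. -/
theorem invariant_kernel_invariant_positive_decomposition_of_compact
    {G : Type} [Group G] [TopologicalSpace G] [IsTopologicalGroup G]
    [CompactSpace G] [T2Space G]
    (H : Subgroup G) (hH : IsClosed (H : Set G))
    (k : G ⧸ H → G ⧸ H → ℂ)
    (hherm : ∀ x y, k y x = (starRingEnd ℂ) (k x y))
    (hinv : IsInvariantKernel H k)
    (kp km : G ⧸ H → G ⧸ H → ℂ)
    (hkpc : Continuous (Function.uncurry kp)) (hkpPD : IsPDKernel H kp)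
    (hkmc : Continuous (Function.uncurry km)) (hkmPD : IsPDKernel H km)
    (hdec : ∀ x y, k x y = kp x y - km x y) :
    ∃ kp' km' : G ⧸ H → G ⧸ H → ℂ,
      Continuous (Function.uncurry kp') ∧ IsPDKernel H kp' ∧ IsInvariantKernel H kp' ∧
      Continuous (Function.uncurry km') ∧ IsPDKernel H km' ∧ IsInvariantKernel H km' ∧
      ∀ x y, k x y = kp' x y - km' x y :=
  invariant_kernel_invariant_positive_decomposition_of_compact_general H k hinv kp km hkpc hkpPD
    hkmc hkmPD hdec
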